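/- arXiv:1107.4142 — 2 statements merged into one kernel-verified Lean document; each statement's English description precedes it below -/
import Mathlib

section
/- Let X be a Polish space, Z a finite set, π_0 : X → Z a continuous map, ν a probability measure on Z, and for each z ∈ Z let P_z be a Borel probability measure on X with P_z({x : π_0(x) = z}) = 1. For a Borel probability measure Q on X define J(Q) = sup over bounded continuous f : X → ℝ of [ ∫_X f dQ − Σ_{z∈Z} ν(z) log ∫_X e^f dP_z ] ∈ [0,∞]. If J(Q) < +∞, then the pushforward of Q under π_0 equals ν. -/
open MeasureTheory BoundedContinuousFunction ENNReal

noncomputable section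
open scoped Classical

/-- The rate function
`J(Q) = sup_{f ∈ C_b(X)} [ ∫_X f dQ − Σ_{z∈Z} ν(z) log ∫_X e^f dP_z ] ∈ [0,∞]`
(the supremum over bounded continuous `f`; since `f = 0` contributes `0`, the
supremum is nonnegative and may be computed in `[0,∞]` via `ENNReal.ofReal`). -/
def Jfun {X : Type*} [TopologicalSpace X] [MeasurableSpace X]
    {Z : Type*} [Fintype Z] [MeasurableSpace Z]
    (ν : Measure Z) (P : Z → Measure X) (Q : Measure X) : ℝ≥0∞ :=
  ⨆ f : X →ᵇ ℝ, ENNReal.ofReal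
    (∫ x, f x ∂Q - ∑ z : Z, (ν {z}).toReal * Real.log (∫ x, Real.exp (f x) ∂(P z)))

/-- The relative entropy `H(Q|P) = ∫ log (dQ/dP) dQ` if `Q ≪ P` (with value `∞`
if the integral diverges), and `H(Q|P) = ∞` otherwise.  Here
`llr Q P x = log (dQ/dP)(x)` is the log-likelihood ratio. -/
def relEnt {X : Type*} [MeasurableSpace X] (Q P : Measure X) : ℝ≥0∞ :=
  if Q ≪ P ∧ Integrable (llr Q P) Q
  then ENNReal.ofReal (∫ x, llr Q P x ∂Q)
  else ⊤

end

/-- if `J(Q) < +∞` then the pushforward of `Q` under `π₀`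
equals `ν`. -/
theorem stmt16 {X : Type*} [TopologicalSpace X] [PolishSpace X]
    [MeasurableSpace X] [BorelSpace X]
    {Z : Type*} [Fintype Z] [TopologicalSpace Z] [DiscreteTopology Z]
    [MeasurableSpace Z] [BorelSpace Z]
    (π₀ : X → Z) (hπ : Continuous π₀)
    (ν : Measure Z) [IsProbabilityMeasure ν]
    (P : Z → Measure X) [∀ z, IsProbabilityMeasure (P z)]
    (hP : ∀ z : Z, P z {x | π₀ x = z} = 1)
    (Q : Measure X) [IsProbabilityMeasure Q]
    (hJ : Jfun ν P Q ≠ ⊤) :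
    Q.map π₀ = ν := by
  classical
  set M := (Jfun ν P Q).toReal with hM
  have hM0 : 0 ≤ M := ENNReal.toReal_nonneg
  have hbound : ∀ f : X →ᵇ ℝ,
      (∫ x, f x ∂Q - ∑ z : Z, (ν {z}).toReal * Real.log (∫ x, Real.exp (f x) ∂(P z))) ≤ M := by
    intro f
    set e : ℝ := ∫ x, f x ∂Q - ∑ z : Z, (ν {z}).toReal * Real.log (∫ x, Real.exp (f x) ∂(P z))
      with he
    have h1 : ENNReal.ofReal e ≤ Jfun ν P Q := le_iSup (fun f : X →ᵇ ℝ => ENNReal.ofReal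
      (∫ x, f x ∂Q - ∑ z : Z, (ν {z}).toReal * Real.log (∫ x, Real.exp (f x) ∂(P z)))) f
    rcases le_or_gt e 0 with h | h
    · exact h.trans hM0
    · have := (ENNReal.ofReal_le_iff_le_toReal hJ).mp h1
      exact this
  -- key: Q {x | π₀ x = z} = ν {z}
  have key : ∀ z : Z, Q {x | π₀ x = z} = ν {z} := by
    intro z
    set A : Set X := {x | π₀ x = z} with hA
    have hAmeas : MeasurableSet A := (hπ.measurable (measurableSet_singleton z))
    -- for each c : ℝ, define the test function
    have main : ∀ c : ℝ, c * ((Q A).toReal - (ν {z}).toReal) ≤ M := by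
      intro c
      have hcont : Continuous fun x => if π₀ x = z then c else (0:ℝ) := by
        have : Continuous fun w : Z => if w = z then c else (0:ℝ) :=
          continuous_of_discreteTopology
        exact this.comp hπ
      set f : X →ᵇ ℝ := BoundedContinuousFunction.ofNormedAddCommGroup
        (fun x => if π₀ x = z then c else 0) hcont |c| (by
          intro x
          by_cases hx : π₀ x = z <;> simp [hx, abs_nonneg, le_abs_self]) with hf
      have hfapp : ∀ x, f x = A.indicator (fun _ => c) x := by
        intro x
        simp only [hf, BoundedContinuousFunction.coe_ofNormedAddCommGroup]
        by_cases hx : π₀ x = z <;> simp [hx, hA, Set.indicator_apply, Set.mem_setOf_eq]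
      -- integral over Q
      have hIQ : ∫ x, f x ∂Q = (Q A).toReal * c := by
        rw [show (fun x => f x) = A.indicator (fun _ => c) from funext hfapp]
        rw [integral_indicator_const c hAmeas]
        simp [smul_eq_mul, measureReal_def]
      -- exponential integrals
      have hPA : ∀ w : Z, P w A = if w = z then 1 else 0 := by
        intro w
        by_cases hw : w = z
        · subst hw; simp [hA, hP w]
        · simp only [if_neg hw]
          have hsub : A ⊆ {x | π₀ x = w}ᶜ := by
            intro x hx
            simp only [hA, Set.mem_setOf_eq] at hx
            simp only [Set.mem_compl_iff, Set.mem_setOf_eq]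
            intro h; exact hw (h ▸ hx ▸ rfl)
          have hcmeas : MeasurableSet {x | π₀ x = w} := hπ.measurable (measurableSet_singleton w)
          have : P w ({x | π₀ x = w}ᶜ) = 0 := by
            rw [measure_compl hcmeas (measure_ne_top _ _), hP w]
            simp
          exact le_antisymm ((measure_mono hsub).trans this.le) (by positivity)
      have hexp : ∀ w : Z, ∫ x, Real.exp (f x) ∂(P w) = if w = z then Real.exp c else 1 := by
        intro w
        have heq : (fun x => Real.exp (f x))
            = fun x => A.indicator (fun _ => Real.exp c - 1) x + 1 := by
          funext x
          rw [hfapp x]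
          by_cases hx : x ∈ A <;> simp [hx]
        rw [heq, integral_add ((integrable_const _).indicator hAmeas) (integrable_const _),
          integral_indicator_const _ hAmeas, integral_const]
        simp only [smul_eq_mul, measureReal_def, measure_univ, ENNReal.toReal_one, one_mul]
        rw [hPA w]
        by_cases hw : w = z <;> simp [hw]
      have hsum : ∑ w : Z, (ν {w}).toReal * Real.log (∫ x, Real.exp (f x) ∂(P w))
          = (ν {z}).toReal * c := by
        have : ∀ w : Z, (ν {w}).toReal * Real.log (∫ x, Real.exp (f x) ∂(P w))
            = if w = z then (ν {z}).toReal * c else 0 := by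
          intro w
          rw [hexp w]
          by_cases hw : w = z <;> simp [hw, Real.log_exp]
        rw [Finset.sum_congr rfl (fun w _ => this w)]
        simp
      have := hbound f
      rw [hIQ, hsum] at this
      calc c * ((Q A).toReal - (ν {z}).toReal)
          = (Q A).toReal * c - (ν {z}).toReal * c := by ring
        _ ≤ M := this
    -- conclude equality of reals
    have hd : (Q A).toReal - (ν {z}).toReal = 0 := by
      by_contra hd
      have h1 := main ((M + 1) / ((Q A).toReal - (ν {z}).toReal))
      rw [div_mul_cancel₀ _ hd] at h1
      linarith
    have : (Q A).toReal = (ν {z}).toReal := by linarith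
    exact (ENNReal.toReal_eq_toReal_iff' (measure_ne_top _ _) (measure_ne_top _ _)).mp this
  refine Measure.ext_of_singleton fun z => ?_
  rw [Measure.map_apply hπ.measurable (measurableSet_singleton z)]
  have : π₀ ⁻¹' {z} = {x | π₀ x = z} := by ext x; simp
  rw [this, key z]
end

section
/- Let X be a Polish space, Z a finite set, π_0 : X → Z a continuous map, ν a probability measure on Z, and for each z ∈ Z let P_z be a Borel probability measure on X with P_z({x : π_0(x) = z}) = 1. Set P = Σ_{z∈Z} ν(z) P_z and, for a Borel probability measure Q on X, J(Q) = sup over bounded continuous f of [ ∫_X f dQ − Σ_{z∈Z} ν(z) log ∫_X e^f dP_z ]. Then (as elements of [0,∞]): J(Q) = H(Q|P) if the pushforward of Q under π_0 equals ν, and J(Q) = +∞ otherwise. -/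
open MeasureTheory BoundedContinuousFunction ENNReal

section AuxDV

open Real Filter

variable {α : Type*} [MeasurableSpace α]

lemma auxDV_integrable_of_bound (μ : Measure α) [IsFiniteMeasure μ] {g : α → ℝ}
    (hg : AEStronglyMeasurable g μ) {M : ℝ} (hb : ∀ x, |g x| ≤ M) : Integrable g μ :=
  (integrable_const M).mono' hg (Eventually.of_forall fun x => by
    simpa [Real.norm_eq_abs] using hb x)

lemma auxDV_integrable_exp (μ : Measure α) [IsFiniteMeasure μ] {g : α → ℝ}
    (hg : AEStronglyMeasurable g μ) {M : ℝ} (hb : ∀ x, |g x| ≤ M) :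
    Integrable (fun x => exp (g x)) μ :=
  (integrable_const (exp M)).mono' (Real.continuous_exp.comp_aestronglyMeasurable hg)
    (Eventually.of_forall fun x => by
      have : g x ≤ M := (abs_le.1 (hb x)).2
      simpa [Real.norm_eq_abs, abs_of_pos (Real.exp_pos _)] using Real.exp_le_exp.2 this)

lemma auxDV_exp_integral_ge (μ : Measure α) [IsProbabilityMeasure μ] {g : α → ℝ}
    (hg : AEStronglyMeasurable g μ) {M : ℝ} (hb : ∀ x, |g x| ≤ M) :
    exp (-M) ≤ ∫ x, exp (g x) ∂μ := by
  have h := integral_mono (integrable_const (exp (-M))) (auxDV_integrable_exp μ hg hb)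
    (fun x => Real.exp_le_exp.2 (neg_le_of_abs_le (hb x)))
  simpa using h

lemma auxDV_exp_integral_le (μ : Measure α) [IsProbabilityMeasure μ] {g : α → ℝ}
    (hg : AEStronglyMeasurable g μ) {M : ℝ} (hb : ∀ x, |g x| ≤ M) :
    ∫ x, exp (g x) ∂μ ≤ exp M := by
  have h := integral_mono (auxDV_integrable_exp μ hg hb) (integrable_const (exp M))
    (fun x => Real.exp_le_exp.2 (le_of_abs_le (hb x)))
  simpa using h

lemma auxDV_exp_integral_pos (μ : Measure α) [IsProbabilityMeasure μ] {g : α → ℝ}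
    (hg : AEStronglyMeasurable g μ) {M : ℝ} (hb : ∀ x, |g x| ≤ M) :
    0 < ∫ x, exp (g x) ∂μ :=
  lt_of_lt_of_le (Real.exp_pos _) (auxDV_exp_integral_ge μ hg hb)

lemma auxDV_jensen_exp (μ : Measure α) [IsProbabilityMeasure μ] {h : α → ℝ}
    (hh : Integrable h μ) (he : Integrable (fun x => exp (h x)) μ) :
    exp (∫ x, h x ∂μ) ≤ ∫ x, exp (h x) ∂μ :=
  convexOn_exp.map_integral_le Real.continuous_exp.continuousOn isClosed_univ
    (Eventually.of_forall fun _ => Set.mem_univ _) hh he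

lemma auxDV_log_sum {Z : Type*} [Fintype Z] (w a : Z → ℝ) (hw : ∀ z, 0 ≤ w z)
    (hw1 : ∑ z, w z = 1) (ha : ∀ z, 0 < a z) :
    ∑ z, w z * Real.log (a z) ≤ Real.log (∑ z, w z * a z) := by
  have h := strictConcaveOn_log_Ioi.concaveOn.le_map_sum (t := Finset.univ) (w := w) (p := a)
    (fun i _ => hw i) hw1 (fun i _ => ha i)
  simpa [smul_eq_mul] using h

lemma auxDV_llr_neg_integrable {Q P : Measure α} [IsProbabilityMeasure Q]
    [IsProbabilityMeasure P] (hQP : Q ≪ P) :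
    Integrable (fun x => max (- llr Q P x) 0) Q := by
  rw [← integrable_rnDeriv_smul_iff hQP]
  refine (integrable_const 1).mono' ?_ (Eventually.of_forall fun x => ?_)
  · exact ((Measure.measurable_rnDeriv Q P).ennreal_toReal.smul
      ((measurable_llr Q P).neg.max measurable_const)).aestronglyMeasurable
  · set t : ℝ := (Q.rnDeriv P x).toReal with ht
    have htnn : 0 ≤ t := ENNReal.toReal_nonneg
    have hllr : llr Q P x = Real.log t := rfl
    rw [hllr, smul_eq_mul, Real.norm_eq_abs,
      abs_of_nonneg (mul_nonneg htnn (le_max_right _ _))]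
    rcases le_or_gt t 1 with h1 | h1
    · rcases eq_or_lt_of_le htnn with h0 | h0
      · simp [← h0]
      · have hlog : -Real.log t = Real.log t⁻¹ := (Real.log_inv t).symm
        have hle : Real.log t⁻¹ ≤ t⁻¹ - 1 := Real.log_le_sub_one_of_pos (inv_pos.2 h0)
        have hmax : max (-Real.log t) 0 ≤ t⁻¹ - 1 + 0 := by
          refine max_le (hlog ▸ hle.trans (le_add_of_nonneg_right le_rfl)) ?_
          have : (0:ℝ) ≤ t⁻¹ - 1 := by
            have : (1:ℝ) ≤ t⁻¹ := (one_le_inv₀ h0).2 h1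
            linarith
          linarith
        calc t * max (-Real.log t) 0 ≤ t * (t⁻¹ - 1 + 0) :=
              mul_le_mul_of_nonneg_left hmax htnn
          _ = t * t⁻¹ - t := by ring
          _ ≤ 1 - 0 := by rw [mul_inv_cancel₀ h0.ne']; linarith
          _ = 1 := by ring
    · have : max (-Real.log t) 0 = 0 := max_eq_right (by
        have := Real.log_pos h1
        linarith)
      simp [this]

end AuxDV
open MeasureTheory BoundedContinuousFunction ENNReal
section AuxDV2
open Real Filter
variable {α : Type*} [MeasurableSpace α]

-- r * exp (g - log r) = if r = 0 then 0 else exp g, for r ≥ 0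
lemma auxDV_key_real {r g : ℝ} (hr : 0 ≤ r) :
    r * exp (g - Real.log r) = if r = 0 then 0 else exp g := by
  rcases eq_or_lt_of_le hr with h0 | h0
  · simp [← h0]
  · rw [if_neg h0.ne']
    rw [Real.exp_sub, Real.exp_log h0]
    field_simp

/-- Gibbs' inequality / easy half of Donsker-Varadhan. -/
lemma auxDV_gibbs {Q P : Measure α} [IsProbabilityMeasure Q] [IsProbabilityMeasure P]
    (hQP : Q ≪ P) (hint : Integrable (llr Q P) Q) {g : α → ℝ} (hgm : Measurable g)
    {M : ℝ} (hb : ∀ x, |g x| ≤ M) :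
    ∫ x, g x ∂Q ≤ ∫ x, llr Q P x ∂Q + Real.log (∫ x, Real.exp (g x) ∂P) := by
  set h : α → ℝ := fun x => g x - llr Q P x with hh_def
  have hgi : Integrable g Q := auxDV_integrable_of_bound Q hgm.aestronglyMeasurable hb
  have hhi : Integrable h Q := hgi.sub hint
  set r : α → ℝ := fun x => (Q.rnDeriv P x).toReal with hr_def
  have hrm : Measurable r := (Measure.measurable_rnDeriv Q P).ennreal_toReal
  have hFm : Measurable fun x => exp (h x) :=
    (hgm.sub (measurable_llr Q P)).exp
  -- pointwise: r x * exp (h x) = if r x = 0 then 0 else exp (g x)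
  have hkey : ∀ x, r x • exp (h x) = if r x = 0 then 0 else exp (g x) := fun x => by
    rw [smul_eq_mul]
    exact auxDV_key_real (g := g x) ENNReal.toReal_nonneg
  have hbdd : ∀ x, ‖r x • exp (h x)‖ ≤ exp M := fun x => by
    rw [hkey x, Real.norm_eq_abs]
    split_ifs with h0
    · simp [Real.exp_pos, (Real.exp_pos M).le]
    · rw [abs_of_pos (Real.exp_pos _)]
      exact Real.exp_le_exp.2 (le_of_abs_le (hb x))
  have hIsmul : Integrable (fun x => r x • exp (h x)) P :=
    (integrable_const (exp M)).mono'
      ((hrm.smul hFm).aestronglyMeasurable) (Eventually.of_forall hbdd)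
  have hIexph : Integrable (fun x => exp (h x)) Q :=
    (integrable_rnDeriv_smul_iff hQP).1 hIsmul
  have hInt_le : ∫ x, exp (h x) ∂Q ≤ ∫ x, exp (g x) ∂P := by
    rw [← integral_rnDeriv_smul hQP (f := fun x => exp (h x))]
    refine integral_mono hIsmul (auxDV_integrable_exp P hgm.aestronglyMeasurable hb) fun x => ?_
    rw [hkey x]
    split_ifs with h0
    · exact (Real.exp_pos _).le
    · exact le_rfl
  have hjen : exp (∫ x, h x ∂Q) ≤ ∫ x, exp (h x) ∂Q := auxDV_jensen_exp Q hhi hIexph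
  have hlog : ∫ x, h x ∂Q ≤ Real.log (∫ x, Real.exp (g x) ∂P) := by
    have h1 : exp (∫ x, h x ∂Q) ≤ ∫ x, Real.exp (g x) ∂P := hjen.trans hInt_le
    have := Real.log_le_log (Real.exp_pos _) h1
    rwa [Real.log_exp] at this
  have hsub : ∫ x, h x ∂Q = ∫ x, g x ∂Q - ∫ x, llr Q P x ∂Q := integral_sub hgi hint
  linarith [hlog, hsub.symm.le]

-- |exp a - exp b| ≤ exp M * |a - b| for a, b ≤ M
lemma auxDV_exp_lip {M a b : ℝ} (ha : a ≤ M) (hb : b ≤ M) :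
    |exp a - exp b| ≤ exp M * |a - b| := by
  wlog hab : b ≤ a generalizing a b
  · have := this hb ha (le_of_not_ge hab)
    rwa [abs_sub_comm, abs_sub_comm b a] at this
  rw [abs_of_nonneg (sub_nonneg.2 (Real.exp_le_exp.2 hab)), abs_of_nonneg (sub_nonneg.2 hab)]
  have h1 : 1 - exp (b - a) ≤ a - b := by
    have := Real.add_one_le_exp (b - a)
    linarith
  have : exp a - exp b = exp a * (1 - exp (b - a)) := by
    rw [mul_sub, mul_one, ← Real.exp_add]
    ring_nf
  rw [this]
  calc exp a * (1 - exp (b - a)) ≤ exp a * (a - b) := by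
        refine mul_le_mul_of_nonneg_left h1 (Real.exp_pos _).le
    _ ≤ exp M * (a - b) :=
        mul_le_mul_of_nonneg_right (Real.exp_le_exp.2 ha) (by linarith)

-- |log u - log v| ≤ c⁻¹ * |u - v| for u, v ≥ c > 0
lemma auxDV_log_lip {c u v : ℝ} (hc : 0 < c) (hu : c ≤ u) (hv : c ≤ v) :
    |Real.log u - Real.log v| ≤ c⁻¹ * |u - v| := by
  wlog huv : v ≤ u generalizing u v
  · have := this hv hu (le_of_not_ge huv)
    rwa [abs_sub_comm, abs_sub_comm v u] at this
  have hv0 : 0 < v := hc.trans_le hv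
  have hu0 : 0 < u := hc.trans_le hu
  rw [abs_of_nonneg (sub_nonneg.2 (Real.log_le_log hv0 huv)),
    abs_of_nonneg (sub_nonneg.2 huv)]
  have h1 : Real.log u - Real.log v = Real.log (u / v) := (Real.log_div hu0.ne' hv0.ne').symm
  rw [h1]
  have h2 : Real.log (u / v) ≤ u / v - 1 := Real.log_le_sub_one_of_pos (div_pos hu0 hv0)
  have h3 : u / v - 1 = (u - v) / v := by field_simp
  have h4 : (u - v) / v ≤ (u - v) / c := by
    apply div_le_div_of_nonneg_left (by linarith) hc hv
  calc Real.log (u / v) ≤ (u - v) / v := by rw [← h3]; exact h2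
    _ ≤ (u - v) / c := h4
    _ = c⁻¹ * (u - v) := div_eq_inv_mul _ _

-- clamp inequality
lemma auxDV_clamp_close {M a b : ℝ} (hb : |b| ≤ M) :
    |max (min a M) (-M) - b| ≤ |a - b| := by
  rcases abs_le.1 hb with ⟨hb1, hb2⟩
  rcases le_total a M with h1 | h1
  · rw [min_eq_left h1]
    rcases le_total a (-M) with h2 | h2
    · rw [max_eq_right h2]
      rw [abs_le]
      constructor
      · rw [abs_sub_comm]; have := le_abs_self (b - a); nlinarith [neg_abs_le (b-a), le_abs_self (b-a)]
      · have := neg_abs_le (a - b); have := le_abs_self (a - b); nlinarith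
    · rw [max_eq_left h2]
  · rw [min_eq_right h1]
    have h2 : -M ≤ M := by linarith
    rw [max_eq_left h2, abs_le]
    constructor
    · have := neg_abs_le (a - b); nlinarith [le_abs_self (a-b)]
    · have := le_abs_self (a - b); nlinarith [neg_abs_le (a-b)]

end AuxDV2
section AuxDV3
open Real Filter MeasureTheory BoundedContinuousFunction

variable {X : Type*} [TopologicalSpace X] [PolishSpace X] [MeasurableSpace X] [BorelSpace X]

/-- Donsker–Varadhan functional supremum over bounded continuous functions. -/
noncomputable def dvSup (Q P : Measure X) : ENNReal :=
  ⨆ f : X →ᵇ ℝ, ENNReal.ofReal (∫ x, f x ∂Q - Real.log (∫ x, Real.exp (f x) ∂P))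

variable {Q P : Measure X} [IsProbabilityMeasure Q] [IsProbabilityMeasure P]

lemma auxDV_lower_meas {g : X → ℝ} (hgm : Measurable g) {M : ℝ} (hM : 0 ≤ M)
    (hb : ∀ x, |g x| ≤ M) :
    ENNReal.ofReal (∫ x, g x ∂Q - Real.log (∫ x, exp (g x) ∂P)) ≤ dvSup Q P := by
  haveI : NormalSpace X := by
    letI := TopologicalSpace.metrizableSpaceMetric X; infer_instance
  refine ENNReal.le_of_forall_pos_le_add fun ε hε _ => ?_
  set C : ℝ := 1 + exp M * exp M with hC
  have hC0 : 0 < C := by positivity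
  set δ : ℝ := ε / C with hδdef
  have hδ : 0 < δ := div_pos (by exact_mod_cast hε) hC0
  set μ : Measure X := Q + P with hμ
  have hgint : Integrable g μ :=
    auxDV_integrable_of_bound μ hgm.aestronglyMeasurable hb
  obtain ⟨f₀, hf₀, hf₀i⟩ := hgint.exists_boundedContinuous_integral_sub_le hδ
  set f₁ : X →ᵇ ℝ := BoundedContinuousFunction.ofNormedAddCommGroup
      (fun x => max (min (f₀ x) M) (-M))
      ((f₀.continuous.min continuous_const).max continuous_const) M
      (fun x => by
        rw [Real.norm_eq_abs, abs_le]
        exact ⟨le_max_right _ _, max_le (min_le_right _ _) (by linarith)⟩) with hf₁def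
  have hf₁b : ∀ x, |f₁ x| ≤ M := fun x => by
    rw [abs_le]
    exact ⟨le_max_right _ _, max_le (min_le_right _ _) (by linarith)⟩
  have hclose : ∀ x, |f₁ x - g x| ≤ ‖g x - f₀ x‖ := fun x => by
    rw [Real.norm_eq_abs, abs_sub_comm (g x)]
    exact auxDV_clamp_close (hb x)
  have hgQ : Integrable g Q := hgint.mono_measure (Measure.le_add_right le_rfl)
  have hdiffQ : Integrable (fun x => ‖g x - f₀ x‖) μ := (hgint.sub hf₀i).norm
  have hdiffInt : ∫ x, ‖g x - f₀ x‖ ∂Q ≤ δ ∧ ∫ x, ‖g x - f₀ x‖ ∂P ≤ δ := by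
    constructor <;>
    · refine le_trans (integral_mono_measure ?_ (Eventually.of_forall fun x => norm_nonneg _)
        hdiffQ) hf₀
      first
        | exact Measure.le_add_right le_rfl
        | exact Measure.le_add_left le_rfl
  have hf₁Q : Integrable (⇑f₁) Q := f₁.integrable Q
  -- |∫ f₁ dQ - ∫ g dQ| ≤ δ
  have hA1 : |∫ x, f₁ x ∂Q - ∫ x, g x ∂Q| ≤ δ := by
    rw [← integral_sub hf₁Q hgQ]
    calc |∫ x, (f₁ x - g x) ∂Q| ≤ ∫ x, ‖f₁ x - g x‖ ∂Q := by rw [← Real.norm_eq_abs]; exact norm_integral_le_integral_norm _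
      _ ≤ ∫ x, ‖g x - f₀ x‖ ∂Q := by
          refine integral_mono (hf₁Q.sub hgQ).norm
            (hdiffQ.mono_measure (Measure.le_add_right le_rfl)) fun x => ?_
          rw [Real.norm_eq_abs]
          exact hclose x
      _ ≤ δ := hdiffInt.1
  -- |∫ exp f₁ dP - ∫ exp g dP| ≤ exp M * δ
  have hef₁ : Integrable (fun x => exp (f₁ x)) P :=
    auxDV_integrable_exp P f₁.continuous.aestronglyMeasurable hf₁b
  have hegP : Integrable (fun x => exp (g x)) P :=
    auxDV_integrable_exp P hgm.aestronglyMeasurable hb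
  have hA2 : |∫ x, exp (f₁ x) ∂P - ∫ x, exp (g x) ∂P| ≤ exp M * δ := by
    rw [← integral_sub hef₁ hegP]
    calc |∫ x, (exp (f₁ x) - exp (g x)) ∂P| ≤ ∫ x, ‖exp (f₁ x) - exp (g x)‖ ∂P :=
          by rw [← Real.norm_eq_abs]; exact norm_integral_le_integral_norm _
      _ ≤ ∫ x, exp M * ‖g x - f₀ x‖ ∂P := by
          refine integral_mono (hef₁.sub hegP).norm
            ((hdiffQ.mono_measure (Measure.le_add_left le_rfl)).const_mul _) fun x => ?_
          rw [Real.norm_eq_abs]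
          refine le_trans (auxDV_exp_lip (abs_le.1 (hf₁b x)).2 (abs_le.1 (hb x)).2) ?_
          exact mul_le_mul_of_nonneg_left ((hclose x)) (Real.exp_pos M).le
      _ = exp M * ∫ x, ‖g x - f₀ x‖ ∂P := by
          rw [integral_const_mul]
      _ ≤ exp M * δ := mul_le_mul_of_nonneg_left hdiffInt.2 (Real.exp_pos M).le
  -- log comparison
  have hgePf₁ : exp (-M) ≤ ∫ x, exp (f₁ x) ∂P :=
    auxDV_exp_integral_ge P f₁.continuous.aestronglyMeasurable hf₁b
  have hgePg : exp (-M) ≤ ∫ x, exp (g x) ∂P :=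
    auxDV_exp_integral_ge P hgm.aestronglyMeasurable hb
  have hA3 : |Real.log (∫ x, exp (f₁ x) ∂P) - Real.log (∫ x, exp (g x) ∂P)|
      ≤ exp M * (exp M * δ) := by
    refine le_trans (auxDV_log_lip (Real.exp_pos (-M)) hgePf₁ hgePg) ?_
    rw [Real.exp_neg, inv_inv]
    exact mul_le_mul_of_nonneg_left hA2 (Real.exp_pos M).le
  -- combine
  have hval : ∫ x, g x ∂Q - Real.log (∫ x, exp (g x) ∂P)
      ≤ (∫ x, f₁ x ∂Q - Real.log (∫ x, exp (f₁ x) ∂P)) + ε := by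
    have h1 := abs_le.1 hA1
    have h3 := abs_le.1 hA3
    have hεδ : δ * C = ε := by
      rw [hδdef]; field_simp
    have : δ + exp M * (exp M * δ) = ε := by
      rw [← hεδ, hC]; ring
    nlinarith [h1.1, h1.2, h3.1, h3.2]
  calc ENNReal.ofReal (∫ x, g x ∂Q - Real.log (∫ x, exp (g x) ∂P))
      ≤ ENNReal.ofReal ((∫ x, f₁ x ∂Q - Real.log (∫ x, exp (f₁ x) ∂P)) + ε) :=
        ENNReal.ofReal_le_ofReal hval
    _ ≤ ENNReal.ofReal (∫ x, f₁ x ∂Q - Real.log (∫ x, exp (f₁ x) ∂P)) + ENNReal.ofReal ε :=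
        ENNReal.ofReal_add_le
    _ ≤ dvSup Q P + ↑ε := by
        refine add_le_add ?_ ?_
        · exact le_iSup (fun f : X →ᵇ ℝ =>
            ENNReal.ofReal (∫ x, f x ∂Q - Real.log (∫ x, Real.exp (f x) ∂P))) f₁
        · rw [ENNReal.ofReal_coe_nnreal]

end AuxDV3
section AuxDV4
open Real Filter MeasureTheory BoundedContinuousFunction Set

variable {X : Type*} [TopologicalSpace X] [PolishSpace X] [MeasurableSpace X] [BorelSpace X]
variable {Q P : Measure X} [IsProbabilityMeasure Q] [IsProbabilityMeasure P]

lemma auxDV_top (h : ¬ Q ≪ P) : dvSup Q P = ⊤ := by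
  haveI : NormalSpace X := by
    letI := TopologicalSpace.metrizableSpaceMetric X; infer_instance
  have hs : ∃ s, P s = 0 ∧ Q s ≠ 0 := by
    by_contra hcon
    push_neg at hcon
    exact h fun s hs => hcon s hs
  obtain ⟨s, hPs, hQs⟩ := hs
  set A := toMeasurable P s with hA
  have hAm : MeasurableSet A := measurableSet_toMeasurable P s
  have hPA : P A = 0 := by rw [hA, measure_toMeasurable]; exact hPs
  have hQA : Q A ≠ 0 := fun h0 => hQs (measure_mono_null (subset_toMeasurable P s) h0)
  have hQAtop : Q A ≠ ⊤ := measure_ne_top Q A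
  obtain ⟨F, hFA, hFcl, hQF⟩ :=
    hAm.exists_lt_isClosed_of_ne_top hQAtop (ENNReal.half_lt_self hQA hQAtop)
  set q : ℝ := (Q F).toReal with hq
  have hq0 : 0 < q := by
    refine ENNReal.toReal_pos ?_ (measure_ne_top Q F)
    exact fun h0 => (lt_irrefl (0:ENNReal)) (by
      simpa [h0] using lt_of_le_of_lt zero_le hQF)
  have hPF : P F = 0 := measure_mono_null hFA hPA
  refine ENNReal.eq_top_of_forall_nnreal_le fun r => ?_
  obtain ⟨n, hn⟩ := exists_nat_gt (((r : ENNReal).toReal + Real.log 2) / q)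
  have hnq : (r : ENNReal).toReal + Real.log 2 < n * q := by
    rw [div_lt_iff₀ hq0] at hn; linarith
  -- open set U ⊇ F with P U small
  obtain ⟨U, hFU, hUo, hPU⟩ := Set.exists_isOpen_lt_of_lt F
    (ENNReal.ofReal (exp (-(2*(n:ℝ)))))
    (by rw [hPF]; exact ENNReal.ofReal_pos.2 (Real.exp_pos _))
  obtain ⟨φ, hφ0, hφ1, hφ01⟩ := exists_continuous_zero_one_of_isClosed
    (isClosed_compl_iff.2 hUo) hFcl
    (Set.disjoint_left.mpr fun x hxc hxF => hxc (hFU hxF))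
  set f : X →ᵇ ℝ := BoundedContinuousFunction.ofNormedAddCommGroup
      (fun x => (n:ℝ) * φ x) (continuous_const.mul φ.continuous) n
      (fun x => by
        rw [Real.norm_eq_abs, abs_of_nonneg (mul_nonneg (Nat.cast_nonneg n) (hφ01 x).1)]
        calc (n:ℝ) * φ x ≤ (n:ℝ) * 1 :=
              mul_le_mul_of_nonneg_left (hφ01 x).2 (Nat.cast_nonneg n)
          _ = n := mul_one _) with hfdef
  have hfb : ∀ x, |f x| ≤ (n:ℝ) := fun x => by
    simp only [hfdef, BoundedContinuousFunction.coe_ofNormedAddCommGroup]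
    rw [abs_of_nonneg (mul_nonneg (Nat.cast_nonneg n) (hφ01 x).1)]
    calc ((n:ℝ)) * φ x ≤ (n:ℝ) * 1 := mul_le_mul_of_nonneg_left (hφ01 x).2 (Nat.cast_nonneg n)
      _ = n := mul_one _
  -- lower bound on ∫ f dQ
  have hlow : (n:ℝ) * q ≤ ∫ x, f x ∂Q := by
    have hind : ∀ x, F.indicator (fun _ => (n:ℝ)) x ≤ f x := fun x => by
      by_cases hx : x ∈ F
      · rw [Set.indicator_of_mem hx]
        have : φ x = 1 := hφ1 hx
        simp only [hfdef, BoundedContinuousFunction.coe_ofNormedAddCommGroup]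
        rw [this, mul_one]
      · rw [Set.indicator_of_notMem hx]
        simp only [hfdef, BoundedContinuousFunction.coe_ofNormedAddCommGroup]
        exact mul_nonneg (Nat.cast_nonneg n) (hφ01 x).1
    have h1 : ∫ x, F.indicator (fun _ => (n:ℝ)) x ∂Q = (Q F).toReal • (n:ℝ) :=
      integral_indicator_const _ hFcl.measurableSet
    have h2 := integral_mono ((integrable_const (n:ℝ)).indicator hFcl.measurableSet)
      (f.integrable Q) hind
    rw [h1] at h2
    rw [smul_eq_mul, mul_comm] at h2
    exact h2
  -- upper bound on ∫ exp f dP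
  have hPU' : (P U).toReal ≤ exp (-(2*(n:ℝ))) := by
    refine ENNReal.toReal_le_of_le_ofReal (Real.exp_pos _).le hPU.le
  have hup : ∫ x, exp (f x) ∂P ≤ 2 := by
    have hpt : ∀ x, exp (f x) ≤ 1 + exp (n:ℝ) * U.indicator (fun _ => (1:ℝ)) x := fun x => by
      by_cases hx : x ∈ U
      · rw [Set.indicator_of_mem hx, mul_one]
        have : f x ≤ (n:ℝ) := le_of_abs_le (hfb x)
        have := Real.exp_le_exp.2 this
        linarith
      · rw [Set.indicator_of_notMem hx, mul_zero, add_zero]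
        have : φ x = 0 := hφ0 hx
        simp only [hfdef, BoundedContinuousFunction.coe_ofNormedAddCommGroup]
        rw [this, mul_zero, Real.exp_zero]
    have hintr : Integrable (fun x => 1 + exp (n:ℝ) * U.indicator (fun _ => (1:ℝ)) x) P :=
      (integrable_const 1).add
        (((integrable_const (1:ℝ)).indicator hUo.measurableSet).const_mul _)
    have h2 := integral_mono
      (auxDV_integrable_exp P f.continuous.aestronglyMeasurable hfb) hintr hpt
    have h3 : ∫ x, (1 + exp (n:ℝ) * U.indicator (fun _ => (1:ℝ)) x) ∂P
        = 1 + exp (n:ℝ) * (P U).toReal := by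
      rw [integral_add (integrable_const 1)
        (((integrable_const (1:ℝ)).indicator hUo.measurableSet).const_mul _)]
      rw [integral_const, integral_const_mul, integral_indicator_const _ hUo.measurableSet]
      simp [measureReal_def]
    rw [h3] at h2
    have h4 : exp (n:ℝ) * (P U).toReal ≤ exp (n:ℝ) * exp (-(2*(n:ℝ))) :=
      mul_le_mul_of_nonneg_left hPU' (Real.exp_pos _).le
    have h5 : exp (n:ℝ) * exp (-(2*(n:ℝ))) = exp (-(n:ℝ)) := by
      rw [← Real.exp_add]; ring_nf
    have h6 : exp (-(n:ℝ)) ≤ 1 := Real.exp_le_one_iff.2 (neg_nonpos.2 (Nat.cast_nonneg n))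
    linarith
  have hlog : Real.log (∫ x, exp (f x) ∂P) ≤ Real.log 2 :=
    Real.log_le_log (auxDV_exp_integral_pos P f.continuous.aestronglyMeasurable hfb) hup
  have hval : (r : ENNReal).toReal < ∫ x, f x ∂Q - Real.log (∫ x, exp (f x) ∂P) := by
    have : (r : ENNReal).toReal < (n:ℝ) * q - Real.log 2 := by linarith
    linarith
  calc (r : ENNReal) ≤ ENNReal.ofReal (∫ x, f x ∂Q - Real.log (∫ x, exp (f x) ∂P)) := by
        refine le_of_lt ?_
        exact (ENNReal.lt_ofReal_iff_toReal_lt ENNReal.coe_ne_top).2 hval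
    _ ≤ dvSup Q P := le_iSup (fun f : X →ᵇ ℝ =>
        ENNReal.ofReal (∫ x, f x ∂Q - Real.log (∫ x, Real.exp (f x) ∂P))) f

end AuxDV4
section AuxDV5
open Real Filter MeasureTheory BoundedContinuousFunction Set

variable {X : Type*} [TopologicalSpace X] [PolishSpace X] [MeasurableSpace X] [BorelSpace X]
variable {Q P : Measure X} [IsProbabilityMeasure Q] [IsProbabilityMeasure P]

lemma auxDV_abs_clamp_le {t n : ℝ} (hn : 0 ≤ n) : |max (min t n) (-n)| ≤ |t| := by
  rw [abs_le]
  refine ⟨le_trans (le_min (neg_abs_le t) (le_trans (neg_nonpos.2 (abs_nonneg t)) hn))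
    (le_max_left _ _), max_le ((min_le_left _ _).trans (le_abs_self t))
      ((neg_nonpos.2 hn).trans (abs_nonneg t))⟩

lemma auxDV_clamp_eq {t n : ℝ} (hn : |t| ≤ n) : max (min t n) (-n) = t := by
  rw [min_eq_left (le_trans (le_abs_self t) hn),
    max_eq_left (le_trans (neg_le_neg hn) (neg_abs_le t))]

lemma auxDV_clamp_ge {t n : ℝ} (hn : 0 ≤ n) :
    min (max t 0) n - max (-t) 0 ≤ max (min t n) (-n) := by
  rcases le_total t 0 with h | h
  · rw [max_eq_right h, max_eq_left (by linarith : (0:ℝ) ≤ -t), min_eq_left hn, zero_sub, neg_neg]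
    rcases le_total t (-n) with h3 | h3
    · exact le_trans h3 (le_max_right _ _)
    · rw [min_eq_left (le_trans h hn)]
      exact le_max_left _ _
  · rw [max_eq_left h, max_eq_right (by linarith : -t ≤ 0), sub_zero]
    exact le_max_left _ _

lemma auxDV_truncation (hQP : Q ≪ P) (n : ℕ) :
    ENNReal.ofReal ((∫ x, max (min (llr Q P x) n) (-(n:ℝ)) ∂Q) - exp (-(n:ℝ)))
      ≤ dvSup Q P := by
  set g : X → ℝ := fun x => if (Q.rnDeriv P x).toReal = 0 then -(n:ℝ)
      else max (min (llr Q P x) n) (-(n:ℝ)) with hgdef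
  have hset : MeasurableSet {x | (Q.rnDeriv P x).toReal = 0} :=
    (Measure.measurable_rnDeriv Q P).ennreal_toReal (measurableSet_singleton 0)
  have hgm : Measurable g :=
    Measurable.ite hset measurable_const
      (((measurable_llr Q P).min measurable_const).max measurable_const)
  have hgb : ∀ x, |g x| ≤ (n:ℝ) := fun x => by
    simp only [hgdef]
    split_ifs with h0
    · rw [abs_neg, Nat.abs_cast]
    · rw [abs_le]
      exact ⟨le_max_right _ _, max_le (min_le_right _ _)
        (neg_le_self (Nat.cast_nonneg n))⟩
  -- ∫ g dQ = ∫ clamp llr dQ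
  have haeQ : g =ᵐ[Q] fun x => max (min (llr Q P x) n) (-(n:ℝ)) := by
    filter_upwards [Measure.rnDeriv_pos hQP, hQP.ae_le (Measure.rnDeriv_lt_top Q P)]
      with x h1 h2
    rw [hgdef]
    exact if_neg (ENNReal.toReal_pos h1.ne' h2.ne).ne'
  have hintg : ∫ x, g x ∂Q = ∫ x, max (min (llr Q P x) n) (-(n:ℝ)) ∂Q :=
    integral_congr_ae haeQ
  -- ∫ exp g dP ≤ 1 + exp (-n)
  have hptP : ∀ᵐ x ∂P, exp (g x) ≤ (Q.rnDeriv P x).toReal + exp (-(n:ℝ)) := by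
    filter_upwards [Measure.rnDeriv_lt_top Q P] with x hx
    simp only [hgdef]
    split_ifs with h0
    · rw [h0]; simp
    · have hρ : 0 < (Q.rnDeriv P x).toReal :=
        lt_of_le_of_ne ENNReal.toReal_nonneg (Ne.symm h0)
      set t : ℝ := llr Q P x with htdef
      have hexplog : exp t = (Q.rnDeriv P x).toReal := by
        rw [htdef, llr, Real.exp_log hρ]
      rcases le_total t (-(n:ℝ)) with h3 | h3
      · have : max (min t n) (-(n:ℝ)) = -(n:ℝ) := by
          rw [max_eq_right]
          exact le_trans (min_le_left _ _) h3
        rw [this]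
        exact le_add_of_nonneg_left ENNReal.toReal_nonneg
      · have : max (min t n) (-(n:ℝ)) ≤ t := max_le (min_le_left _ _) h3
        calc exp (max (min t n) (-(n:ℝ))) ≤ exp t := Real.exp_le_exp.2 this
          _ = (Q.rnDeriv P x).toReal := hexplog
          _ ≤ _ := le_add_of_nonneg_right (Real.exp_pos _).le
  have hexpint : Integrable (fun x => exp (g x)) P :=
    auxDV_integrable_exp P hgm.aestronglyMeasurable hgb
  have hrhsint : Integrable (fun x => (Q.rnDeriv P x).toReal + exp (-(n:ℝ))) P :=
    Measure.integrable_toReal_rnDeriv.add (integrable_const _)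
  have hup : ∫ x, exp (g x) ∂P ≤ 1 + exp (-(n:ℝ)) := by
    have h2 := integral_mono_ae hexpint hrhsint hptP
    have h3 : ∫ x, ((Q.rnDeriv P x).toReal + exp (-(n:ℝ))) ∂P = 1 + exp (-(n:ℝ)) := by
      rw [integral_add Measure.integrable_toReal_rnDeriv (integrable_const _),
        Measure.integral_toReal_rnDeriv hQP, integral_const]
      simp
    rw [h3] at h2
    exact h2
  have hlog : Real.log (∫ x, exp (g x) ∂P) ≤ exp (-(n:ℝ)) := by
    have h1 : Real.log (∫ x, exp (g x) ∂P) ≤ Real.log (1 + exp (-(n:ℝ))) :=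
      Real.log_le_log (auxDV_exp_integral_pos P hgm.aestronglyMeasurable hgb) hup
    have h2 : Real.log (1 + exp (-(n:ℝ))) ≤ (1 + exp (-(n:ℝ))) - 1 :=
      Real.log_le_sub_one_of_pos (by positivity)
    linarith
  refine le_trans ?_ (auxDV_lower_meas hgm (Nat.cast_nonneg n) hgb)
  apply ENNReal.ofReal_le_ofReal
  rw [hintg]
  linarith

lemma auxDV_relEnt_le_dvSup : relEnt Q P ≤ dvSup Q P := by
  by_cases hQP : Q ≪ P
  · by_cases hint : Integrable (llr Q P) Q
    · rw [relEnt, if_pos ⟨hQP, hint⟩]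
      have htrunc := fun n : ℕ => auxDV_truncation (Q := Q) (P := P) hQP n
      have htend1 : Tendsto (fun n : ℕ => ∫ x, max (min (llr Q P x) n) (-(n:ℝ)) ∂Q)
          atTop (nhds (∫ x, llr Q P x ∂Q)) := by
        refine tendsto_integral_of_dominated_convergence (fun x => |llr Q P x|)
          (fun n => (((measurable_llr Q P).min measurable_const).max
            measurable_const).aestronglyMeasurable)
          hint.abs (fun n => Eventually.of_forall fun x => ?_)
          (Eventually.of_forall fun x => ?_)
        · rw [Real.norm_eq_abs]
          exact auxDV_abs_clamp_le (Nat.cast_nonneg n)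
        · refine tendsto_atTop_of_eventually_const (i₀ := ⌈|llr Q P x|⌉₊) fun n hn => ?_
          exact auxDV_clamp_eq (le_trans (Nat.le_ceil _) (Nat.cast_le.2 hn))
      have htend2 : Tendsto (fun n : ℕ => exp (-(n:ℝ))) atTop (nhds 0) := by
        have h1 : Tendsto (fun n : ℕ => -(n:ℝ)) atTop atBot :=
          tendsto_neg_atBot_iff.2 tendsto_natCast_atTop_atTop
        exact Real.tendsto_exp_atBot.comp h1
      have htend : Tendsto (fun n : ℕ => ENNReal.ofReal
          ((∫ x, max (min (llr Q P x) n) (-(n:ℝ)) ∂Q) - exp (-(n:ℝ)))) atTop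
          (nhds (ENNReal.ofReal (∫ x, llr Q P x ∂Q))) := by
        have := (htend1.sub htend2)
        rw [sub_zero] at this
        exact (ENNReal.continuous_ofReal.tendsto _).comp this
      exact le_of_tendsto htend (Eventually.of_forall htrunc)
    · rw [relEnt, if_neg (fun hc => hint hc.2)]
      refine top_le_iff.2 ?_
      refine ENNReal.eq_top_of_forall_nnreal_le fun r => ?_
      have hneg : Integrable (fun x => max (- llr Q P x) 0) Q :=
        auxDV_llr_neg_integrable hQP
      set c : ℝ := ∫ x, max (- llr Q P x) 0 ∂Q with hc
      have hc0 : 0 ≤ c := integral_nonneg fun x => le_max_right _ _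
      have hposm : Measurable fun x => max (llr Q P x) 0 :=
        (measurable_llr Q P).max measurable_const
      have hlint : ∫⁻ x, ENNReal.ofReal (max (llr Q P x) 0) ∂Q = ⊤ := by
        by_contra hfin
        have hpos_int : Integrable (fun x => max (llr Q P x) 0) Q := by
          refine ⟨hposm.aestronglyMeasurable, (hasFiniteIntegral_iff_ofReal
            (Eventually.of_forall fun x => le_max_right (llr Q P x) (0:ℝ))).2 ?_⟩
          exact lt_top_iff_ne_top.2 hfin
        refine hint ?_
        have := hpos_int.sub hneg
        refine this.congr (Eventually.of_forall fun x => ?_)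
        exact max_zero_sub_max_neg_zero_eq_self _
      -- MCT
      set φ : ℕ → X → ENNReal := fun n x => ENNReal.ofReal (min (max (llr Q P x) 0) n)
        with hφdef
      have hφm : ∀ n, Measurable (φ n) := fun n =>
        (hposm.min measurable_const).ennreal_ofReal
      have hφmono : Monotone φ := fun m n hmn x =>
        ENNReal.ofReal_le_ofReal (min_le_min le_rfl (Nat.cast_le.2 hmn))
      have hφsup : ∀ x, (⨆ n, φ n x) = ENNReal.ofReal (max (llr Q P x) 0) := fun x => by
        refine le_antisymm (iSup_le fun n => ENNReal.ofReal_le_ofReal (min_le_left _ _)) ?_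
        refine le_iSup_of_le ⌈max (llr Q P x) 0⌉₊ (ENNReal.ofReal_le_ofReal ?_)
        exact le_min le_rfl (Nat.le_ceil _)
      have hsup : (⨆ n, ∫⁻ x, φ n x ∂Q) = ⊤ := by
        rw [← lintegral_iSup hφm hφmono]
        rw [← hlint]
        exact lintegral_congr fun x => hφsup x
      obtain ⟨n, hn⟩ := iSup_eq_top.1 hsup
        (ENNReal.ofReal ((r : ENNReal).toReal + c + 2)) ENNReal.ofReal_lt_top
      have hφfin : ∫⁻ x, φ n x ∂Q ≠ ⊤ := by
        have hle : ∫⁻ x, φ n x ∂Q ≤ ENNReal.ofReal (n:ℝ) := by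
          refine le_trans (lintegral_mono fun x =>
            ENNReal.ofReal_le_ofReal (min_le_right _ _)) ?_
          rw [lintegral_const, measure_univ, mul_one]
        exact ne_of_lt (lt_of_le_of_lt hle ENNReal.ofReal_lt_top)
      have hminint : ∫ x, min (max (llr Q P x) 0) n ∂Q = (∫⁻ x, φ n x ∂Q).toReal := by
        rw [integral_eq_lintegral_of_nonneg_ae
          (Eventually.of_forall fun x =>
            (le_min (le_max_right (llr Q P x) (0:ℝ)) (Nat.cast_nonneg n) :
              (0:ℝ) ≤ min (max (llr Q P x) 0) (n:ℝ)))
          (hposm.min measurable_const).aestronglyMeasurable]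
      have hbig : (r : ENNReal).toReal + c + 2 < ∫ x, min (max (llr Q P x) 0) n ∂Q := by
        rw [hminint]
        refine (ENNReal.ofReal_lt_iff_lt_toReal ?_ hφfin).1 hn
        positivity
      have hminintg : Integrable (fun x => min (max (llr Q P x) 0) n) Q :=
        auxDV_integrable_of_bound Q (hposm.min measurable_const).aestronglyMeasurable
          (M := (n:ℝ)) (fun x => by
            rw [abs_of_nonneg (le_min (le_max_right _ _) (Nat.cast_nonneg n))]
            exact min_le_right _ _)
      have hclampint : Integrable (fun x => max (min (llr Q P x) n) (-(n:ℝ))) Q :=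
        auxDV_integrable_of_bound Q
          ((((measurable_llr Q P).min measurable_const).max
            measurable_const)).aestronglyMeasurable
          (M := (n:ℝ)) (fun x => by
            rw [abs_le]
            exact ⟨le_max_right _ _, max_le (min_le_right _ _)
              (neg_le_self (Nat.cast_nonneg n))⟩)
      have hmono_int : ∫ x, min (max (llr Q P x) 0) n ∂Q - c
          ≤ ∫ x, max (min (llr Q P x) n) (-(n:ℝ)) ∂Q := by
        rw [← integral_sub hminintg hneg]
        refine integral_mono (hminintg.sub hneg) hclampint fun x => ?_
        exact auxDV_clamp_ge (Nat.cast_nonneg n)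
      have hval : (r : ENNReal).toReal
          < (∫ x, max (min (llr Q P x) n) (-(n:ℝ)) ∂Q) - exp (-(n:ℝ)) := by
        have hexp1 : exp (-(n:ℝ)) ≤ 1 :=
          Real.exp_le_one_iff.2 (neg_nonpos.2 (Nat.cast_nonneg n))
        linarith
      exact le_of_lt (lt_of_lt_of_le
        ((ENNReal.lt_ofReal_iff_toReal_lt ENNReal.coe_ne_top).2 hval)
        (auxDV_truncation hQP n))
  · rw [relEnt, if_neg (fun hc => hQP hc.1), auxDV_top hQP]

end AuxDV5
/-- with `P = Σ_{z∈Z} ν(z) P_z`, one has (in `[0,∞]`)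
`J(Q) = H(Q|P)` if the pushforward of `Q` under `π₀` equals `ν`, and
`J(Q) = +∞` otherwise. -/
theorem stmt18 {X : Type*} [TopologicalSpace X] [PolishSpace X]
    [MeasurableSpace X] [BorelSpace X]
    {Z : Type*} [Fintype Z] [TopologicalSpace Z] [DiscreteTopology Z]
    [MeasurableSpace Z] [BorelSpace Z]
    (π₀ : X → Z) (hπ : Continuous π₀)
    (ν : Measure Z) [IsProbabilityMeasure ν]
    (P : Z → Measure X) [∀ z, IsProbabilityMeasure (P z)]
    (hP : ∀ z : Z, P z {x | π₀ x = z} = 1)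
    (Q : Measure X) [IsProbabilityMeasure Q] :
    (Q.map π₀ = ν → Jfun ν P Q = relEnt Q (∑ z : Z, ν {z} • P z)) ∧
    (Q.map π₀ ≠ ν → Jfun ν P Q = ⊤) := by
  classical
  haveI : MeasurableSingletonClass Z := ⟨fun z => (isOpen_discrete {z}).measurableSet⟩
  have hν1 : ∑ z : Z, ν {z} = 1 := by
    have hdisj : ((Finset.univ : Finset Z) : Set Z).PairwiseDisjoint
        (fun z : Z => ({z} : Set Z)) := fun a _ b _ hab => by simpa using hab
    have h1 := measure_biUnion_finset (μ := ν) hdisj (fun b _ => measurableSet_singleton b)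
    have h2 : ⋃ z ∈ (Finset.univ : Finset Z), ({z} : Set Z) = Set.univ := by
      ext x; simp
    rw [h2, measure_univ] at h1
    exact h1.symm
  haveI hPbprob : IsProbabilityMeasure (∑ z : Z, ν {z} • P z) := by
    constructor
    rw [Measure.finset_sum_apply]
    simp only [Measure.smul_apply, smul_eq_mul, measure_univ, mul_one]
    exact hν1
  have hw0 : ∀ z : Z, (0:ℝ) ≤ (ν {z}).toReal := fun z => ENNReal.toReal_nonneg
  have hw1 : ∑ z : Z, (ν {z}).toReal = 1 := by
    rw [← ENNReal.toReal_sum (fun z _ => measure_ne_top ν _), hν1, ENNReal.toReal_one]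
  have hPbeq : ∀ {g : X → ℝ}, (∀ z, Integrable g (P z)) →
      ∫ x, g x ∂(∑ z : Z, ν {z} • P z) = ∑ z : Z, (ν {z}).toReal * ∫ x, g x ∂(P z) := by
    intro g hg
    rw [integral_finset_sum_measure (fun z _ => (hg z).smul_measure (measure_ne_top ν _))]
    exact Finset.sum_congr rfl fun z _ => by rw [integral_smul_measure, smul_eq_mul]
  have hfb : ∀ f : X →ᵇ ℝ, ∀ x, |f x| ≤ ‖f‖ := fun f x => by
    rw [← Real.norm_eq_abs]; exact f.norm_coe_le_norm x
  have haew : ∀ z : Z, ∀ᵐ x ∂(P z), π₀ x = z := fun z => by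
    rw [ae_iff]
    have hm : MeasurableSet {x | π₀ x = z} := hπ.measurable (measurableSet_singleton z)
    have h0 : P z {x | π₀ x = z}ᶜ = 0 := by
      rw [measure_compl hm (measure_ne_top _ _), hP z, measure_univ, tsub_self]
    exact h0
  -- dvSup ≤ Jfun
  have hdvJ : dvSup Q (∑ z : Z, ν {z} • P z) ≤ Jfun ν P Q := by
    rw [dvSup, Jfun]
    refine iSup_mono fun f => ENNReal.ofReal_le_ofReal ?_
    have haz : ∀ z, 0 < ∫ x, Real.exp (f x) ∂(P z) := fun z =>
      auxDV_exp_integral_pos (P z) f.continuous.aestronglyMeasurable (hfb f)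
    have hsum := hPbeq (g := fun x => Real.exp (f x))
      (fun z => auxDV_integrable_exp (P z) f.continuous.aestronglyMeasurable (hfb f))
    have hls := auxDV_log_sum (fun z => (ν {z}).toReal)
      (fun z => ∫ x, Real.exp (f x) ∂(P z)) hw0 hw1 haz
    rw [← hsum] at hls
    linarith
  constructor
  · intro hmarg
    refine le_antisymm ?_ (le_trans auxDV_relEnt_le_dvSup hdvJ)
    by_cases hfin : Q ≪ (∑ z : Z, ν {z} • P z) ∧
        Integrable (llr Q (∑ z : Z, ν {z} • P z)) Q
    · obtain ⟨hQP, hint⟩ := hfin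
      rw [relEnt, if_pos ⟨hQP, hint⟩, Jfun]
      refine iSup_le fun f => ENNReal.ofReal_le_ofReal ?_
      set M : ℝ := ‖f‖ with hM
      have haz : ∀ z, 0 < ∫ x, Real.exp (f x) ∂(P z) := fun z =>
        auxDV_exp_integral_pos (P z) f.continuous.aestronglyMeasurable (hfb f)
      set c : Z → ℝ := fun z => Real.log (∫ x, Real.exp (f x) ∂(P z)) with hc
      have hcb : ∀ z, |c z| ≤ M := fun z => by
        simp only [hc]
        rw [abs_le]
        constructor
        · have h1 : Real.exp (-M) ≤ ∫ x, Real.exp (f x) ∂(P z) :=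
            auxDV_exp_integral_ge (P z) f.continuous.aestronglyMeasurable (hfb f)
          have h2 := Real.log_le_log (Real.exp_pos (-M)) h1
          rwa [Real.log_exp] at h2
        · have h1 : ∫ x, Real.exp (f x) ∂(P z) ≤ Real.exp M :=
            auxDV_exp_integral_le (P z) f.continuous.aestronglyMeasurable (hfb f)
          have h2 := Real.log_le_log (haz z) h1
          rwa [Real.log_exp] at h2
      set g : X → ℝ := fun x => f x - c (π₀ x) with hg
      have hcm : Measurable c := measurable_of_countable c
      have hgm : Measurable g :=
        f.continuous.measurable.sub (hcm.comp hπ.measurable)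
      have hgb : ∀ x, |g x| ≤ M + M := fun x => by
        simp only [hg]
        calc |f x - c (π₀ x)| ≤ |f x| + |c (π₀ x)| := abs_sub _ _
          _ ≤ M + M := add_le_add (hfb f x) (hcb _)
      have hcπint : Integrable (fun x => c (π₀ x)) Q :=
        auxDV_integrable_of_bound Q (hcm.comp hπ.measurable).aestronglyMeasurable
          (fun x => hcb _)
      have hcint : ∫ x, c (π₀ x) ∂Q = ∑ z : Z, (ν {z}).toReal * c z := by
        have h1 : ∫ y, c y ∂(Q.map π₀) = ∫ x, c (π₀ x) ∂Q :=
          integral_map hπ.measurable.aemeasurable hcm.aestronglyMeasurable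
        rw [← h1, hmarg, integral_fintype (auxDV_integrable_of_bound ν
          hcm.aestronglyMeasurable (fun z => hcb z))]
        simp [smul_eq_mul, measureReal_def]
      have hgQint : ∫ x, g x ∂Q = ∫ x, f x ∂Q - ∑ z : Z, (ν {z}).toReal * c z := by
        simp only [hg]
        rw [integral_sub (f.integrable Q) hcπint, hcint]
      have hIeg : ∀ z, Integrable (fun x => Real.exp (g x)) (P z) := fun z =>
        auxDV_integrable_exp (P z) hgm.aestronglyMeasurable hgb
      have hegz : ∀ z : Z, ∫ x, Real.exp (g x) ∂(P z) = 1 := fun z => by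
        have hcongr : (fun x => Real.exp (g x)) =ᵐ[P z]
            fun x => Real.exp (f x) * (Real.exp (c z))⁻¹ := by
          filter_upwards [haew z] with x hx
          simp only [hg]
          rw [hx, Real.exp_sub, div_eq_mul_inv]
        rw [integral_congr_ae hcongr, integral_mul_const]
        have : Real.exp (c z) = ∫ x, Real.exp (f x) ∂(P z) := by
          simp only [hc]
          exact Real.exp_log (haz z)
        rw [this]
        exact mul_inv_cancel₀ (haz z).ne'
      have hegPb : ∫ x, Real.exp (g x) ∂(∑ z : Z, ν {z} • P z) = 1 := by
        rw [hPbeq hIeg]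
        simp only [hegz, mul_one]
        exact hw1
      have hgibbs := auxDV_gibbs hQP hint hgm hgb
      rw [hegPb, Real.log_one, add_zero, hgQint] at hgibbs
      have hcc : ∀ z : Z, c z = Real.log (∫ x, Real.exp (f x) ∂(P z)) := fun z => by
        simp only [hc]
      simp only [hcc] at hgibbs
      linarith
    · rw [relEnt, if_neg hfin]
      exact le_top
  · intro hne
    have hz : ∃ z : Z, Q.map π₀ {z} ≠ ν {z} := by
      by_contra hcon
      push_neg at hcon
      exact hne (Measure.ext_iff_singleton.2 hcon)
    obtain ⟨z, hz⟩ := hz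
    have hAm : MeasurableSet (π₀ ⁻¹' {z}) := hπ.measurable (measurableSet_singleton z)
    have hQA : Q.map π₀ {z} = Q (π₀ ⁻¹' {z}) :=
      Measure.map_apply hπ.measurable (measurableSet_singleton z)
    set a : ℝ := (Q (π₀ ⁻¹' {z})).toReal with ha
    set b : ℝ := (ν {z}).toReal with hb
    have hab : a ≠ b := by
      intro h
      refine hz ?_
      rw [hQA]
      exact (ENNReal.toReal_eq_toReal_iff' (measure_ne_top _ _) (measure_ne_top _ _)).1 h
    set d : ℝ := a - b with hd
    have hdne : d ≠ 0 := sub_ne_zero.2 hab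
    have hd0 : 0 < d^2 := by
      rcases hdne.lt_or_gt with h | h <;> nlinarith
    refine ENNReal.eq_top_of_forall_nnreal_le fun r => ?_
    obtain ⟨m, hm⟩ := exists_nat_gt (((r:ENNReal)).toReal / d^2)
    rw [div_lt_iff₀ hd0] at hm
    set cc : ℝ := m * d with hcc
    set f : X →ᵇ ℝ := BoundedContinuousFunction.ofNormedAddCommGroup
      (fun x => if π₀ x = z then cc else 0)
      ((continuous_of_discreteTopology (f := fun w : Z => if w = z then cc else 0)).comp hπ :
        Continuous fun x => if π₀ x = z then cc else 0)
      |cc| (fun x => by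
        rw [Real.norm_eq_abs]
        show |if π₀ x = z then cc else 0| ≤ |cc|
        split_ifs
        · exact le_rfl
        · simp) with hf
    have hfa : ∫ x, f x ∂Q = cc * a := by
      have hfeq : ∀ x, f x = (π₀ ⁻¹' {z}).indicator (fun _ => cc) x := fun x => by
        simp only [hf, BoundedContinuousFunction.coe_ofNormedAddCommGroup,
          Set.indicator_apply, Set.mem_preimage, Set.mem_singleton_iff]
      calc ∫ x, f x ∂Q = ∫ x, (π₀ ⁻¹' {z}).indicator (fun _ => cc) x ∂Q :=
            integral_congr_ae (Filter.Eventually.of_forall hfeq)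
        _ = (Q (π₀ ⁻¹' {z})).toReal • cc := integral_indicator_const _ hAm
        _ = cc * a := by rw [smul_eq_mul, mul_comm]
    have hlogz : ∀ w : Z, Real.log (∫ x, Real.exp (f x) ∂(P w))
        = if w = z then cc else 0 := fun w => by
      have hcongr : (fun x => Real.exp (f x)) =ᵐ[P w]
          fun _ => Real.exp (if w = z then cc else 0) := by
        filter_upwards [haew w] with x hx
        simp only [hf, BoundedContinuousFunction.coe_ofNormedAddCommGroup, hx]
      rw [integral_congr_ae hcongr, integral_const, probReal_univ,
        one_smul, Real.log_exp]
    have hsumlog : ∑ w : Z, (ν {w}).toReal * Real.log (∫ x, Real.exp (f x) ∂(P w))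
        = b * cc := by
      have hterm : ∀ w : Z, (ν {w}).toReal * Real.log (∫ x, Real.exp (f x) ∂(P w))
          = if w = z then (ν {w}).toReal * cc else 0 := fun w => by
        rw [hlogz w]
        split_ifs <;> simp
      rw [Finset.sum_congr rfl (fun w _ => hterm w), Finset.sum_ite_eq' Finset.univ z
        (fun w => (ν {w}).toReal * cc), if_pos (Finset.mem_univ z)]
    have hval : ∫ x, f x ∂Q
        - ∑ w : Z, (ν {w}).toReal * Real.log (∫ x, Real.exp (f x) ∂(P w))
        = m * d^2 := by
      rw [hfa, hsumlog]
      simp only [hcc, hd]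
      ring
    have hlt : (r : ENNReal) < ENNReal.ofReal (∫ x, f x ∂Q
        - ∑ w : Z, (ν {w}).toReal * Real.log (∫ x, Real.exp (f x) ∂(P w))) :=
      (ENNReal.lt_ofReal_iff_toReal_lt ENNReal.coe_ne_top).2 (by rw [hval]; exact hm)
    refine le_of_lt (lt_of_lt_of_le hlt ?_)
    rw [Jfun]
    exact le_iSup (fun f : X →ᵇ ℝ => ENNReal.ofReal (∫ x, f x ∂Q -
      ∑ w : Z, (ν {w}).toReal * Real.log (∫ x, Real.exp (f x) ∂(P w)))) f
end
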